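/- Let f : ℝ₋ⁿ → ℝ be an indicator profile which is not identically zero. Then f(t) < 0 for every t ∈ ℝ₋ⁿ, the level set L = {t ∈ ℝ₋ⁿ : f(t) = −1} is nonempty, and f(t) = sup{ ⟨a, t⟩ : a ∈ Γ_L } for every t ∈ ℝ₋ⁿ; that is, f is the restriction to ℝ₋ⁿ of the supporting function of the set Γ_L. (This is the assertion in Section 4 of the paper that f is the restriction to ℝ₋ⁿ of the supporting function of Γ_{L^Φ}^Φ; for Φ the indicator of log|g| with g holomorphic, Γ_L is the Newton diagram of g at 0.) -/

import Mathlib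

open Set

/-- The negative orthant `ℝ₋ⁿ = (−∞,0)ⁿ`. -/
def negOrth (n : ℕ) : Set (Fin n → ℝ) := {t | ∀ i, t i < 0}

/-- The standard inner product `⟨a, t⟩ = ∑ aᵢ tᵢ` on `ℝⁿ`. -/
def dotp {n : ℕ} (a t : Fin n → ℝ) : ℝ := ∑ i, a i * t i

/-- An indicator profile: convex, nonpositive, nondecreasing in each variable,
and positively homogeneous on the negative orthant. -/
def IsIndicatorProfile {n : ℕ} (f : (Fin n → ℝ) → ℝ) : Prop :=
  ConvexOn ℝ (negOrth n) f ∧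
  (∀ t ∈ negOrth n, f t ≤ 0) ∧
  (∀ s ∈ negOrth n, ∀ t ∈ negOrth n, (∀ i, s i ≤ t i) → f s ≤ f t) ∧
  (∀ c : ℝ, 0 < c → ∀ t ∈ negOrth n, f (c • t) = c * f t)

/-- The level set `L = {t ∈ ℝ₋ⁿ : f(t) = −1}`. -/
def levelL {n : ℕ} (f : (Fin n → ℝ) → ℝ) : Set (Fin n → ℝ) :=
  {t ∈ negOrth n | f t = -1}

/-- `Γ_F = {a ∈ ℝ₊ⁿ : sup_{t∈F} ⟨a,t⟩ = sup_{t∈L} ⟨a,t⟩ = −1}`. -/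
def GammaSet {n : ℕ} (f : (Fin n → ℝ) → ℝ) (F : Set (Fin n → ℝ)) :
    Set (Fin n → ℝ) :=
  {a | (∀ i, 0 ≤ a i) ∧ sSup ((fun t => dotp a t) '' F) = -1 ∧
    sSup ((fun t => dotp a t) '' levelL f) = -1}

/-- `Θ_F = {λa : 0 ≤ λ ≤ 1, a ∈ Γ_F}`. -/
def ThetaSet {n : ℕ} (f : (Fin n → ℝ) → ℝ) (F : Set (Fin n → ℝ)) :
    Set (Fin n → ℝ) :=
  {x | ∃ l : ℝ, 0 ≤ l ∧ l ≤ 1 ∧ ∃ a ∈ GammaSet f F, x = l • a}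

/-! Since `f` is convex, hence continuous, on the open orthant, separating `(t, f t)` from the
open strict epigraph gives a subgradient at `t`; positive homogeneity turns it into a linear form
`⟨a, ·⟩ ≤ f` with `⟨a, t⟩ = f t`, and `a ≥ 0` because `f ≤ 0`. Rescaling `t` into `L` shows that
this `a` lies in `Γ_L`, while the same rescaling gives `⟨a', t⟩ ≤ f t` for every `a' ∈ Γ_L`, so
the supremum is attained. Strict negativity comes from monotonicity and homogeneity: every point
of the orthant lies below a positive multiple of a point where `f < 0`. -/

open Filter Topology

section Subgradient

variable {E : Type*} {s : Set E} {f : E → ℝ} {x : E}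

lemma ContinuousOn.isOpen_strict_epigraph [TopologicalSpace E] (hf : ContinuousOn f s)
    (hs : IsOpen s) : IsOpen {p : E × ℝ | p.1 ∈ s ∧ f p.1 < p.2} := by
  have hcont : ContinuousOn (fun p : E × ℝ => (f p.1, p.2)) (s ×ˢ Set.univ) :=
    (hf.comp continuousOn_fst fun _ hp => hp.1).prodMk continuousOn_snd
  convert hcont.isOpen_inter_preimage (hs.prod isOpen_univ)
    (isOpen_lt continuous_fst continuous_snd) using 1
  ext
  simp

theorem ConvexOn.exists_subgradient [TopologicalSpace E] [AddCommGroup E]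
    [IsTopologicalAddGroup E] [Module ℝ E] [ContinuousSMul ℝ E] (hf : ConvexOn ℝ s f)
    (hcont : ContinuousOn f s) (hs : IsOpen s) (hx : x ∈ s) :
    ∃ φ : StrongDual ℝ E, ∀ y ∈ s, f x + φ (y - x) ≤ f y := by
  obtain ⟨L, hL⟩ := geometric_hahn_banach_open_point hf.convex_strict_epigraph
    (hcont.isOpen_strict_epigraph hs) (x := (x, f x)) (by simp)
  set β := L (0, 1)
  have hL_apply (y : E) (c : ℝ) : L (y, c) = L (y, 0) + c * β := by
    rw [← smul_eq_mul, ← L.map_smul, ← L.map_add, Prod.smul_mk, smul_zero, smul_eq_mul,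
      mul_one, Prod.mk_add_mk, add_zero, zero_add]
  have hβ : β < 0 := by
    have hsep := hL (x, f x + 1) ⟨hx, lt_add_one _⟩
    rw [hL_apply x (f x + 1), hL_apply x (f x)] at hsep
    linarith
  refine ⟨(-β)⁻¹ • L.comp (.inl ℝ E ℝ), fun y hy => le_of_forall_pos_lt_add fun ε hε => ?_⟩
  have hsep := hL (y, f y + ε) ⟨hy, lt_add_of_pos_right _ hε⟩
  rw [hL_apply y (f y + ε), hL_apply x (f x)] at hsep
  have hsub : L (y - x, 0) = L (y, 0) - L (x, 0) := by
    rw [← L.map_sub, Prod.mk_sub_mk, sub_zero]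
  have key : (-β)⁻¹ * L (y - x, 0) < f y - f x + ε := by
    rw [inv_mul_lt_iff₀ (neg_pos.2 hβ), hsub]
    linarith
  simpa using (by linarith : f x + (-β)⁻¹ * L (y - x, 0) < f y + ε)

lemma eq_and_le_of_subgradient_of_posHomogeneous [AddCommGroup E] [Module ℝ E]
    (φ : E →ₗ[ℝ] ℝ) (hsmul : ∀ c : ℝ, 0 < c → c • x ∈ s)
    (hhom : ∀ c : ℝ, 0 < c → f (c • x) = c * f x)
    (hφ : ∀ y ∈ s, f x + φ (y - x) ≤ f y) :
    φ x = f x ∧ ∀ y ∈ s, φ y ≤ f y := by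
  have h₂ := hφ _ (hsmul 2 two_pos)
  have h₁ := hφ _ (hsmul 2⁻¹ (by norm_num))
  rw [hhom 2 two_pos, map_sub, map_smul, smul_eq_mul] at h₂
  rw [hhom _ (by norm_num), map_sub, map_smul, smul_eq_mul] at h₁
  have hφx : φ x = f x := by linarith
  refine ⟨hφx, fun y hy => ?_⟩
  have := hφ y hy
  rw [map_sub, hφx] at this
  linarith

theorem ConvexOn.exists_le_eq_of_posHomogeneous [TopologicalSpace E] [AddCommGroup E]
    [IsTopologicalAddGroup E] [Module ℝ E] [ContinuousSMul ℝ E] (hf : ConvexOn ℝ s f)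
    (hcont : ContinuousOn f s) (hs : IsOpen s) (hx : x ∈ s)
    (hsmul : ∀ c : ℝ, 0 < c → c • x ∈ s) (hhom : ∀ c : ℝ, 0 < c → f (c • x) = c * f x) :
    ∃ φ : StrongDual ℝ E, φ x = f x ∧ ∀ y ∈ s, φ y ≤ f y := by
  obtain ⟨φ, hφ⟩ := hf.exists_subgradient hcont hs hx
  exact ⟨φ, eq_and_le_of_subgradient_of_posHomogeneous φ.toLinearMap hsmul hhom hφ⟩

end Subgradient

section Orthant

variable {n : ℕ}

lemma negOrth_eq_pi (n : ℕ) : negOrth n = Set.univ.pi fun _ => Iio 0 := by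
  ext
  simp [negOrth]

lemma isOpen_negOrth (n : ℕ) : IsOpen (negOrth n) := by
  rw [negOrth_eq_pi]
  exact isOpen_set_pi Set.finite_univ fun _ _ => isOpen_Iio

lemma closure_negOrth (n : ℕ) : closure (negOrth n) = {t | ∀ i, t i ≤ 0} := by
  ext
  simp [negOrth_eq_pi, closure_pi_set, Pi.le_def]

lemma smul_mem_negOrth {t : Fin n → ℝ} (ht : t ∈ negOrth n) {c : ℝ} (hc : 0 < c) :
    c • t ∈ negOrth n :=
  fun i => mul_neg_of_pos_of_neg hc (ht i)

lemma exists_pos_le_smul {t : Fin n → ℝ} (ht : t ∈ negOrth n) (s : Fin n → ℝ) :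
    ∃ c > 0, ∀ i, t i ≤ c * s i := by
  have h (i : Fin n) : ∀ᶠ c in 𝓝[>] (0 : ℝ), t i ≤ c * s i := by
    have : Tendsto (fun c : ℝ => c * s i) (𝓝[>] 0) (𝓝 0) :=
      ((continuous_mul_const (s i)).tendsto' 0 0 (zero_mul _)).mono_left nhdsWithin_le_nhds
    exact (this.eventually (eventually_gt_nhds (ht i))).mono fun _ => le_of_lt
  exact ((eventually_all.2 h).and self_mem_nhdsWithin).exists.imp fun c hc => ⟨hc.2, hc.1⟩

lemma dotp_smul (a : Fin n → ℝ) (c : ℝ) (t : Fin n → ℝ) : dotp a (c • t) = c * dotp a t := by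
  simp [dotp, Finset.mul_sum, mul_left_comm]

lemma StrongDual.apply_eq_dotp (φ : StrongDual ℝ (Fin n → ℝ)) (t : Fin n → ℝ) :
    φ t = dotp (fun i => φ fun j => if i = j then 1 else 0) t := by
  rw [dotp, ← φ.coe_coe, φ.toLinearMap.pi_apply_eq_sum_univ t]
  exact Finset.sum_congr rfl fun i _ => by rw [smul_eq_mul, mul_comm]

lemma StrongDual.nonneg_apply_basis_of_nonpos {φ : StrongDual ℝ (Fin n → ℝ)}
    (hφ : ∀ t ∈ negOrth n, φ t ≤ 0) (i : Fin n) : 0 ≤ φ fun j => if i = j then 1 else 0 := by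
  have hclosure : closure (negOrth n) ⊆ {t | φ t ≤ 0} :=
    closure_minimal hφ (isClosed_le φ.continuous continuous_const)
  have hmem : -(fun j => if i = j then 1 else 0 : Fin n → ℝ) ∈ closure (negOrth n) := by
    rw [closure_negOrth]
    intro j
    simp only [Pi.neg_apply]
    split_ifs <;> norm_num
  simpa using hclosure hmem

end Orthant

section IndicatorProfile

variable {n : ℕ} {f : (Fin n → ℝ) → ℝ}

lemma IsIndicatorProfile.neg_of_ne_zero (hf : IsIndicatorProfile f)
    (hne : ∃ t ∈ negOrth n, f t ≠ 0) : ∀ t ∈ negOrth n, f t < 0 := by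
  obtain ⟨-, hnonpos, hmono, hhom⟩ := hf
  obtain ⟨t₀, ht₀, hft₀⟩ := hne
  intro t ht
  obtain ⟨c, hc, hle⟩ := exists_pos_le_smul ht t₀
  calc f t ≤ f (c • t₀) := hmono t ht _ (smul_mem_negOrth ht₀ hc) hle
    _ = c * f t₀ := hhom c hc t₀ ht₀
    _ < 0 := mul_neg_of_pos_of_neg hc ((hnonpos t₀ ht₀).lt_of_ne hft₀)

lemma inv_neg_smul_mem_levelL (hhom : ∀ c : ℝ, 0 < c → ∀ t ∈ negOrth n, f (c • t) = c * f t)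
    {t : Fin n → ℝ} (ht : t ∈ negOrth n) (hft : f t < 0) : (-f t)⁻¹ • t ∈ levelL f := by
  have hc : 0 < (-f t)⁻¹ := inv_pos.2 (neg_pos.2 hft)
  refine ⟨smul_mem_negOrth ht hc, ?_⟩
  rw [hhom _ hc t ht, inv_neg, neg_mul, inv_mul_cancel₀ hft.ne]

lemma IsIndicatorProfile.exists_dotp_le_eq (hf : IsIndicatorProfile f) {t : Fin n → ℝ}
    (ht : t ∈ negOrth n) :
    ∃ a : Fin n → ℝ, (∀ i, 0 ≤ a i) ∧ dotp a t = f t ∧ ∀ s ∈ negOrth n, dotp a s ≤ f s := by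
  obtain ⟨hconv, hnonpos, -, hhom⟩ := hf
  obtain ⟨φ, hφt, hφ⟩ := hconv.exists_le_eq_of_posHomogeneous
    (hconv.continuousOn (isOpen_negOrth n)) (isOpen_negOrth n) ht
    (fun c hc => smul_mem_negOrth ht hc) (fun c hc => hhom c hc t ht)
  refine ⟨_, φ.nonneg_apply_basis_of_nonpos fun s hs => (hφ s hs).trans (hnonpos s hs),
    ?_, fun s hs => ?_⟩
  · rw [← φ.apply_eq_dotp, hφt]
  · rw [← φ.apply_eq_dotp]
    exact hφ s hs

lemma IsIndicatorProfile.isGreatest_dotp (hf : IsIndicatorProfile f)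
    (hneg : ∀ t ∈ negOrth n, f t < 0) {t : Fin n → ℝ} (ht : t ∈ negOrth n) :
    IsGreatest ((fun a => dotp a t) '' {a : Fin n → ℝ | (∀ i, 0 ≤ a i) ∧
      sSup ((fun s => dotp a s) '' levelL f) = -1}) (f t) := by
  have hft := hneg t ht
  have hlevel := inv_neg_smul_mem_levelL hf.2.2.2 ht hft
  refine ⟨?_, ?_⟩
  · obtain ⟨a, ha, hat, has⟩ := hf.exists_dotp_le_eq ht
    refine ⟨a, ⟨ha, IsGreatest.csSup_eq ⟨⟨_, hlevel, ?_⟩, ?_⟩⟩, hat⟩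
    · show dotp a ((-f t)⁻¹ • t) = -1
      rw [dotp_smul, hat, inv_neg, neg_mul, inv_mul_cancel₀ hft.ne]
    · rintro _ ⟨s, ⟨hs, hfs⟩, rfl⟩
      exact hfs ▸ has s hs
  · rintro _ ⟨a, ⟨-, ha⟩, rfl⟩
    -- `sSup` of a set of reals that is not bounded above is the junk value `0`
    have hbdd : BddAbove ((fun s => dotp a s) '' levelL f) := by
      by_contra h
      rw [Real.sSup_of_not_bddAbove h] at ha
      norm_num at ha
    have : dotp a ((-f t)⁻¹ • t) ≤ -1 := ha ▸ le_csSup hbdd ⟨_, hlevel, rfl⟩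
    rw [dotp_smul, inv_mul_le_iff₀ (neg_pos.2 hft)] at this
    show dotp a t ≤ f t
    linarith

end IndicatorProfile

theorem indicator_profile_supporting_function_general (n : ℕ)
    (f : (Fin n → ℝ) → ℝ) (hf : IsIndicatorProfile f)
    (hne : ∃ t ∈ negOrth n, f t ≠ 0) :
    (∀ t ∈ negOrth n, f t < 0) ∧
    (levelL f).Nonempty ∧
    ∀ t ∈ negOrth n,
      f t = sSup ((fun a => dotp a t) ''
        {a : Fin n → ℝ | (∀ i, 0 ≤ a i) ∧
          sSup ((fun s => dotp a s) '' levelL f) = -1}) := by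
  have hneg := hf.neg_of_ne_zero hne
  obtain ⟨t₀, ht₀, -⟩ := hne
  exact ⟨hneg, ⟨_, inv_neg_smul_mem_levelL hf.2.2.2 ht₀ (hneg t₀ ht₀)⟩,
    fun t ht => (hf.isGreatest_dotp hneg ht).csSup_eq.symm⟩

/-- An indicator profile not identically zero is strictly negative on `ℝ₋ⁿ`,
its level set `L = {f = −1}` is nonempty, and `f` is the restriction to `ℝ₋ⁿ`
of the supporting function of `Γ_L = {a ∈ ℝ₊ⁿ : sup_{t∈L} ⟨a,t⟩ = −1}`:
`f(t) = sup{⟨a,t⟩ : a ∈ Γ_L}`. -/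
theorem indicator_profile_supporting_function (n : ℕ) (hn : 1 ≤ n)
    (f : (Fin n → ℝ) → ℝ) (hf : IsIndicatorProfile f)
    (hne : ∃ t ∈ negOrth n, f t ≠ 0) :
    (∀ t ∈ negOrth n, f t < 0) ∧
    (levelL f).Nonempty ∧
    ∀ t ∈ negOrth n,
      f t = sSup ((fun a => dotp a t) ''
        {a : Fin n → ℝ | (∀ i, 0 ≤ a i) ∧
          sSup ((fun s => dotp a s) '' levelL f) = -1}) :=
  indicator_profile_supporting_function_general n f hf hne
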